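/- arXiv:1703.06866 — 8 statements merged into one kernel-verified Lean document; each statement's English description precedes it below -/
import Mathlib

section
/- If there exists a point M in the plane of an equilateral triangle with side length θ > 0 such that the distances from M to all three vertices are rational, then θ² = α ± √β for some rationals α, β with β ≥ 0 and α > 0; in particular θ is a root of a polynomial x⁴ + ux² + v with rational coefficients. -/
noncomputable section

abbrev Pt := EuclideanSpace ℝ (Fin 2)

def IsRat (x : ℝ) : Prop := ∃ q : ℚ, (q : ℝ) = x

/-- `θ` is "good": some point of the plane is at rational distance from all
vertices of an equilateral triangle of side length `θ`. -/
def Good (θ : ℝ) : Prop :=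
  ∃ A B C M : Pt, dist A B = θ ∧ dist B C = θ ∧ dist C A = θ ∧
    IsRat (dist M A) ∧ IsRat (dist M B) ∧ IsRat (dist M C)

/-!
The vectors from `M` to the three vertices are three vectors in the plane, so their Gram
determinant vanishes; expressing the inner products through the side length `t` and the
distances `a, b, c` turns this into `3 (a⁴ + b⁴ + c⁴ + t⁴) = (a² + b² + c² + t²)²`.
For rational `a, b, c` this is a monic quadratic equation over `ℚ` in `t²`, and solving it gives
`t² = α ± √β` with `α = (a² + b² + c²) / 2`, positive because `t ≤ a + b`.
-/

lemma equilateral_relation_of_coords {x₁ y₁ x₂ y₂ x₃ y₃ t a b c : ℝ} (ht : t ≠ 0)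
    (ha : x₁ ^ 2 + y₁ ^ 2 = a ^ 2) (hb : x₂ ^ 2 + y₂ ^ 2 = b ^ 2)
    (hc : x₃ ^ 2 + y₃ ^ 2 = c ^ 2)
    (h₁₂ : (x₁ - x₂) ^ 2 + (y₁ - y₂) ^ 2 = t ^ 2)
    (h₂₃ : (x₂ - x₃) ^ 2 + (y₂ - y₃) ^ 2 = t ^ 2)
    (h₃₁ : (x₃ - x₁) ^ 2 + (y₃ - y₁) ^ 2 = t ^ 2) :
    3 * (a ^ 4 + b ^ 4 + c ^ 4 + t ^ 4) = (a ^ 2 + b ^ 2 + c ^ 2 + t ^ 2) ^ 2 := by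
  have gram : (x₁ ^ 2 + y₁ ^ 2) * (x₂ ^ 2 + y₂ ^ 2) * (x₃ ^ 2 + y₃ ^ 2)
      + 2 * (x₁ * x₂ + y₁ * y₂) * (x₂ * x₃ + y₂ * y₃) * (x₃ * x₁ + y₃ * y₁)
      - (x₁ ^ 2 + y₁ ^ 2) * (x₂ * x₃ + y₂ * y₃) ^ 2
      - (x₂ ^ 2 + y₂ ^ 2) * (x₃ * x₁ + y₃ * y₁) ^ 2
      - (x₃ ^ 2 + y₃ ^ 2) * (x₁ * x₂ + y₁ * y₂) ^ 2 = 0 := by ring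
  have h₁₂' : x₁ * x₂ + y₁ * y₂ = (a ^ 2 + b ^ 2 - t ^ 2) / 2 := by
    linear_combination (ha + hb - h₁₂) / 2
  have h₂₃' : x₂ * x₃ + y₂ * y₃ = (b ^ 2 + c ^ 2 - t ^ 2) / 2 := by
    linear_combination (hb + hc - h₂₃) / 2
  have h₃₁' : x₃ * x₁ + y₃ * y₁ = (c ^ 2 + a ^ 2 - t ^ 2) / 2 := by
    linear_combination (hc + ha - h₃₁) / 2
  rw [ha, hb, hc, h₁₂', h₂₃', h₃₁'] at gram
  have ht2 : t ^ 2 ≠ 0 := pow_ne_zero 2 ht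
  apply mul_left_cancel₀ ht2
  linear_combination (-8 : ℝ) * gram

lemma dist_sq_eq_coords (x y : Pt) : dist x y ^ 2 = (x 0 - y 0) ^ 2 + (x 1 - y 1) ^ 2 := by
  rw [EuclideanSpace.dist_eq, Real.sq_sqrt (by positivity)]
  simp [Fin.sum_univ_two, Real.dist_eq, sq_abs]

lemma equilateral_dist_relation {A B C : Pt} {t : ℝ} (hAB : dist A B = t) (hBC : dist B C = t)
    (hCA : dist C A = t) (M : Pt) :
    3 * (dist M A ^ 4 + dist M B ^ 4 + dist M C ^ 4 + t ^ 4) =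
      (dist M A ^ 2 + dist M B ^ 2 + dist M C ^ 2 + t ^ 2) ^ 2 := by
  rcases eq_or_ne t 0 with rfl | ht
  · obtain rfl : A = B := dist_eq_zero.mp hAB
    obtain rfl : A = C := (dist_eq_zero.mp hCA).symm
    ring
  have to_M (P : Pt) : (P 0 - M 0) ^ 2 + (P 1 - M 1) ^ 2 = dist M P ^ 2 := by
    rw [dist_sq_eq_coords]; ring
  have side {P Q : Pt} (h : dist P Q = t) :
      ((P 0 - M 0) - (Q 0 - M 0)) ^ 2 + ((P 1 - M 1) - (Q 1 - M 1)) ^ 2 = t ^ 2 := by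
    rw [← h, dist_sq_eq_coords]; ring
  exact equilateral_relation_of_coords ht (to_M A) (to_M B) (to_M C) (side hAB) (side hBC)
    (side hCA)

lemma exists_eq_add_or_sub_sqrt_of_quadratic {x : ℝ} {p q : ℚ} (h : x ^ 2 - p * x + q = 0) :
    ∃ β : ℚ, 0 ≤ β ∧ (x = (p / 2 : ℚ) + √β ∨ x = (p / 2 : ℚ) - √β) := by
  have hβ : ((p ^ 2 / 4 - q : ℚ) : ℝ) = (x - (p / 2 : ℚ)) ^ 2 := by
    push_cast
    linear_combination -h
  refine ⟨p ^ 2 / 4 - q, by exact_mod_cast hβ ▸ sq_nonneg _, ?_⟩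
  rw [hβ, Real.sqrt_sq_eq_abs]
  rcases abs_cases (x - (p / 2 : ℚ)) with ⟨he, -⟩ | ⟨he, -⟩
  · left; rw [he]; ring
  · right; rw [he]; ring

theorem stmt_0 (θ : ℝ) (hθ : 0 < θ) (h : Good θ) :
    (∃ α β : ℚ, 0 ≤ β ∧ 0 < α ∧
      (θ ^ 2 = α + Real.sqrt β ∨ θ ^ 2 = α - Real.sqrt β)) ∧
    ∃ u v : ℚ, θ ^ 4 + (u : ℝ) * θ ^ 2 + (v : ℝ) = 0 := by
  obtain ⟨A, B, C, M, hAB, hBC, hCA, ⟨a, hA⟩, ⟨b, hB⟩, ⟨c, hC⟩⟩ := h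
  have relation := equilateral_dist_relation hAB hBC hCA M
  rw [← hA, ← hB, ← hC] at relation
  set s : ℚ := a ^ 2 + b ^ 2 + c ^ 2
  set v : ℚ := (3 * (a ^ 4 + b ^ 4 + c ^ 4) - s ^ 2) / 2
  have quadratic : (θ ^ 2) ^ 2 - s * θ ^ 2 + v = 0 := by
    push_cast [s, v]
    linear_combination relation / 2
  have hs : 0 < s := by
    have hab : θ ≤ a + b := hAB ▸ hA ▸ hB ▸ dist_triangle_left A B M
    have ha : (0 : ℝ) ≤ a := hA ▸ dist_nonneg
    have hb : (0 : ℝ) ≤ b := hB ▸ dist_nonneg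
    have : (0 : ℝ) < a ^ 2 + b ^ 2 + c ^ 2 := by
      nlinarith [sq_nonneg (a - b : ℝ), sq_nonneg (c : ℝ)]
    exact_mod_cast this
  obtain ⟨β, hβ, hroot⟩ := exists_eq_add_or_sub_sqrt_of_quadratic quadratic
  exact ⟨⟨s / 2, β, hβ, half_pos hs, hroot⟩, -s, v, by push_cast; linear_combination quadratic⟩
end
end

section
/- For any point M in the plane of an equilateral triangle ABC with side length θ, if a = MA, b = MB, c = MC, then 3(a⁴ + b⁴ + c⁴ + θ⁴) = (a² + b² + c² + θ²)². -/
/-!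
The vectors `B - A`, `C - A`, `M - A` lie in a plane, so their Gram determinant vanishes.
Polarization expresses every inner product through the distances, and the determinant
becomes `θ² / 8` times the difference of the two sides of the identity. For `θ = 0` the
triangle is a single point and the identity is trivial.
-/

noncomputable section

theorem Matrix.det_gram_eq_zero_of_finrank_lt {𝕜 E n : Type*} [RCLike 𝕜]
    [NormedAddCommGroup E] [InnerProductSpace 𝕜 E] [FiniteDimensional 𝕜 E]
    [Fintype n] [DecidableEq n] (v : n → E) (h : Module.finrank 𝕜 E < Fintype.card n) :
    (gram 𝕜 v).det = 0 := by
  by_contra hdet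
  exact h.not_ge (det_gram_ne_zero_iff_linearIndependent.mp hdet).fintype_card_le_finrank

open RealInnerProductSpace in
theorem eight_mul_det_gram_of_equilateral {V : Type*} [NormedAddCommGroup V] [InnerProductSpace ℝ V]
    {θ : ℝ} {x y : V} (hx : ‖x‖ = θ) (hy : ‖y‖ = θ) (hxy : ‖x - y‖ = θ) (z : V) :
    8 * (Matrix.gram ℝ ![x, y, z]).det =
      θ ^ 2 * ((‖z‖ ^ 2 + ‖z - x‖ ^ 2 + ‖z - y‖ ^ 2 + θ ^ 2) ^ 2 -
        3 * (‖z‖ ^ 4 + ‖z - x‖ ^ 4 + ‖z - y‖ ^ 4 + θ ^ 4)) := by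
  have hxy' : ⟪x, y⟫ = θ ^ 2 / 2 := by
    have := norm_sub_sq_real x y
    rw [hx, hy, hxy] at this
    linarith
  have hxz : ⟪x, z⟫ = (‖z‖ ^ 2 + θ ^ 2 - ‖z - x‖ ^ 2) / 2 := by
    rw [norm_sub_sq_real, hx, real_inner_comm]
    ring
  have hyz : ⟪y, z⟫ = (‖z‖ ^ 2 + θ ^ 2 - ‖z - y‖ ^ 2) / 2 := by
    rw [norm_sub_sq_real, hy, real_inner_comm]
    ring
  simp only [Matrix.det_fin_three, Matrix.gram_apply, Matrix.cons_val_zero, Matrix.cons_val_one,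
    Matrix.cons_val_two, Matrix.head_cons, Matrix.tail_cons, real_inner_self_eq_norm_sq,
    real_inner_comm x z, real_inner_comm y z, real_inner_comm x y, hx, hy, hxy', hxz, hyz]
  ring

theorem EuclideanGeometry.three_mul_sum_dist_pow_four_of_equilateral
    {V P : Type*} [NormedAddCommGroup V] [InnerProductSpace ℝ V] [FiniteDimensional ℝ V]
    [MetricSpace P] [NormedAddTorsor V P] (hV : Module.finrank ℝ V ≤ 2)
    {θ : ℝ} {A B C : P} (hAB : dist A B = θ) (hBC : dist B C = θ) (hCA : dist C A = θ) (M : P) :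
    3 * (dist M A ^ 4 + dist M B ^ 4 + dist M C ^ 4 + θ ^ 4) =
      (dist M A ^ 2 + dist M B ^ 2 + dist M C ^ 2 + θ ^ 2) ^ 2 := by
  rcases eq_or_ne θ 0 with rfl | hθ
  · obtain rfl : A = B := dist_eq_zero.mp hAB
    obtain rfl : A = C := dist_eq_zero.mp hBC
    ring
  have hdist (X Y : P) : ‖(X -ᵥ A) - (Y -ᵥ A)‖ = dist X Y := by
    rw [vsub_sub_vsub_cancel_right, dist_eq_norm_vsub]
  have hnorm (X : P) : ‖X -ᵥ A‖ = dist X A := (dist_eq_norm_vsub V X A).symm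
  have hdet := eight_mul_det_gram_of_equilateral ((hnorm B).trans (dist_comm B A ▸ hAB)) ((hnorm C).trans hCA)
    ((hdist B C).trans hBC) (M -ᵥ A)
  rw [Matrix.det_gram_eq_zero_of_finrank_lt _ (by simpa using hV.trans_lt (by norm_num)),
    hnorm, hdist, hdist, mul_zero, eq_comm] at hdet
  linear_combination -(mul_eq_zero.mp hdet).resolve_left (pow_ne_zero 2 hθ)

theorem stmt_1_general (θ : ℝ) (A B C M : Pt)
    (hAB : dist A B = θ) (hBC : dist B C = θ) (hCA : dist C A = θ) :
    3 * ((dist M A) ^ 4 + (dist M B) ^ 4 + (dist M C) ^ 4 + θ ^ 4) =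
      ((dist M A) ^ 2 + (dist M B) ^ 2 + (dist M C) ^ 2 + θ ^ 2) ^ 2 :=
  EuclideanGeometry.three_mul_sum_dist_pow_four_of_equilateral finrank_euclideanSpace_fin.le
    hAB hBC hCA M

theorem stmt_1 (θ : ℝ) (hθ : 0 < θ) (A B C M : Pt)
    (hAB : dist A B = θ) (hBC : dist B C = θ) (hCA : dist C A = θ) :
    3 * ((dist M A) ^ 4 + (dist M B) ^ 4 + (dist M C) ^ 4 + θ ^ 4) =
      ((dist M A) ^ 2 + (dist M B) ^ 2 + (dist M C) ^ 2 + θ ^ 2) ^ 2 :=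
  stmt_1_general θ A B C M hAB hBC hCA
end
end

section
/- Let q > 1 be a squarefree integer and θ = λ√q with λ a positive rational. Then there exists a point M in the plane of the equilateral triangle with side θ at rational distance from all three vertices if and only if there exist rationals a, b, e, r, s with e ≠ 0 satisfying a² + 3b² = q, (a+e)² + 3(b+e)² = q·r², and (a−e)² + 3(b+e)² = q·s². -/
noncomputable section

/-!
If `M` is at distances `p, m, n` from the vertices of an equilateral triangle `ABC` of side `θ` in
the plane, the Gram determinant of `B - A, C - A, M - A` vanishes, which in terms of distances reads
`3 (p⁴ + m⁴ + n⁴ + θ⁴) = (p² + m² + n² + θ²)²`. In the frame `A = 0`, `B = (θ, 0)`,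
`C = (θ/2, √3 θ/2)`, `M = θ (α, √3 β)` the squared distances are `θ² (α² + 3β²)`,
`θ² ((α-1)² + 3β²)` and `θ² ((α-1/2)² + 3(β-1/2)²)`; polarization gives
`α = (p² + θ² - m²)/(2θ²)` and `β = (p² + θ² + m² - 2n²)/(6θ²)`, rational when `θ² = λ² q` is, and
the relation above is exactly what makes these coordinates consistent with `p`.
The substitution `e = λq/(2p)`, `a = e (3β - α)`, `b = -e (α + β)`, `r = m/p`, `s = n/p` turns the
three distance equations into the three equations of the statement, and is invertible when
`p ≠ 0`. Finally `p = 0` would put `M` at `A` and make `θ = λ√q = m` rational, which is impossible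
for squarefree `q > 1`.
-/

open Module RealInnerProductSpace

theorem Squarefree.isUnit_of_isSquare {R : Type*} [Monoid R] {x : R} (hx : Squarefree x)
    (h : IsSquare x) : IsUnit x := by
  obtain ⟨k, rfl⟩ := h
  exact (hx k dvd_rfl).mul (hx k dvd_rfl)

theorem irrational_sqrt_of_squarefree {q : ℤ} (hq : 1 < q) (hsf : Squarefree q) :
    Irrational √q :=
  (irrational_sqrt_intCast_iff_of_nonneg (by omega)).2 fun h => by
    have := Int.isUnit_iff.1 (hsf.isUnit_of_isSquare h)
    omega

theorem gram_det_eq_zero_fin_two (u v w : EuclideanSpace ℝ (Fin 2)) :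
    ‖u‖ ^ 2 * ‖v‖ ^ 2 * ‖w‖ ^ 2 + 2 * ⟪u, v⟫ * ⟪v, w⟫ * ⟪w, u⟫ =
      ‖u‖ ^ 2 * ⟪v, w⟫ ^ 2 + ‖v‖ ^ 2 * ⟪w, u⟫ ^ 2 + ‖w‖ ^ 2 * ⟪u, v⟫ ^ 2 := by
  simp only [← real_inner_self_eq_norm_sq, EuclideanSpace.inner_eq_star_dotProduct, dotProduct,
    Fin.sum_univ_two, Pi.star_apply, star_trivial]
  ring

section Plane

variable {E : Type*} [NormedAddCommGroup E] [InnerProductSpace ℝ E] [Fact (finrank ℝ E = 2)]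

theorem gram_det_eq_zero (u v w : E) :
    ‖u‖ ^ 2 * ‖v‖ ^ 2 * ‖w‖ ^ 2 + 2 * ⟪u, v⟫ * ⟪v, w⟫ * ⟪w, u⟫ =
      ‖u‖ ^ 2 * ⟪v, w⟫ ^ 2 + ‖v‖ ^ 2 * ⟪w, u⟫ ^ 2 + ‖w‖ ^ 2 * ⟪u, v⟫ ^ 2 := by
  have := FiniteDimensional.of_fact_finrank_eq_two (K := ℝ) (V := E)
  let f := ((stdOrthonormalBasis ℝ E).reindex (finCongr (Fact.out : finrank ℝ E = 2))).repr
  simpa only [f.norm_map, f.inner_map_map] using gram_det_eq_zero_fin_two (f u) (f v) (f w)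

theorem norm_relation_of_equilateral {u v w : E} {t : ℝ} (hu : ‖u‖ = t) (hv : ‖v‖ = t)
    (huv : ‖u - v‖ = t) :
    3 * (‖w‖ ^ 4 + ‖w - u‖ ^ 4 + ‖w - v‖ ^ 4 + t ^ 4) =
      (‖w‖ ^ 2 + ‖w - u‖ ^ 2 + ‖w - v‖ ^ 2 + t ^ 2) ^ 2 := by
  rcases eq_or_ne t 0 with rfl | ht
  · obtain rfl : u = 0 := norm_eq_zero.1 hu
    obtain rfl : v = 0 := norm_eq_zero.1 hv
    simp only [sub_zero]
    ring
  have iuv : ⟪u, v⟫ = t ^ 2 / 2 := by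
    linarith [huv ▸ hu ▸ hv ▸ norm_sub_sq_real u v]
  have iwu : ⟪w, u⟫ = (‖w‖ ^ 2 + t ^ 2 - ‖w - u‖ ^ 2) / 2 := by
    linarith [hu ▸ norm_sub_sq_real w u]
  have ivw : ⟪v, w⟫ = (‖w‖ ^ 2 + t ^ 2 - ‖w - v‖ ^ 2) / 2 := by
    linarith [hv ▸ norm_sub_sq_real w v, real_inner_comm v w]
  have gram := gram_det_eq_zero u v w
  rw [hu, hv, iuv, iwu, ivw] at gram
  refine mul_left_cancel₀ (pow_ne_zero 2 ht) ?_
  linear_combination (-8) * gram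

theorem dist_relation_of_equilateral {A B C M : E} {t : ℝ} (hAB : dist A B = t)
    (hBC : dist B C = t) (hCA : dist C A = t) :
    3 * (dist M A ^ 4 + dist M B ^ 4 + dist M C ^ 4 + t ^ 4) =
      (dist M A ^ 2 + dist M B ^ 2 + dist M C ^ 2 + t ^ 2) ^ 2 := by
  have hMB : dist M B = ‖(M - A) - (B - A)‖ := by rw [sub_sub_sub_cancel_right, dist_eq_norm]
  have hMC : dist M C = ‖(M - A) - (C - A)‖ := by rw [sub_sub_sub_cancel_right, dist_eq_norm]
  rw [dist_eq_norm M A, hMB, hMC]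
  refine norm_relation_of_equilateral ?_ ?_ ?_
  · rw [← dist_eq_norm, dist_comm, hAB]
  · rw [← dist_eq_norm, hCA]
  · rw [sub_sub_sub_cancel_right, ← dist_eq_norm, hBC]

end Plane

theorem isRat_of_sq_eq {x : ℝ} (hx : 0 ≤ x) {ρ : ℚ} (h : x ^ 2 = (ρ : ℝ) ^ 2) : IsRat x :=
  ⟨|ρ|, by rw [Rat.cast_abs, ← sq_eq_sq₀ (abs_nonneg _) hx, sq_abs, h]⟩

theorem dist_sq_toLp_fin_two (x₀ x₁ y₀ y₁ : ℝ) :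
    dist !₂[x₀, x₁] !₂[y₀, y₁] ^ 2 = (x₀ - y₀) ^ 2 + (x₁ - y₁) ^ 2 := by
  rw [EuclideanSpace.dist_eq, Real.sq_sqrt (by positivity), Fin.sum_univ_two, Real.dist_eq,
    Real.dist_eq, sq_abs, sq_abs]
  simp

theorem good_of_sq_dist {θ α β : ℝ} (hθ : 0 ≤ θ) {p m n : ℚ}
    (hp : θ ^ 2 * (α ^ 2 + 3 * β ^ 2) = p ^ 2)
    (hm : θ ^ 2 * ((α - 1) ^ 2 + 3 * β ^ 2) = m ^ 2)
    (hn : θ ^ 2 * ((α - 1 / 2) ^ 2 + 3 * (β - 1 / 2) ^ 2) = n ^ 2) : Good θ := by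
  have h3 : √3 ^ 2 = 3 := Real.sq_sqrt (by norm_num)
  refine ⟨!₂[0, 0], !₂[θ, 0], !₂[θ / 2, √3 / 2 * θ], !₂[α * θ, √3 * β * θ],
    (sq_eq_sq₀ dist_nonneg hθ).1 ?_, (sq_eq_sq₀ dist_nonneg hθ).1 ?_,
    (sq_eq_sq₀ dist_nonneg hθ).1 ?_, isRat_of_sq_eq dist_nonneg (ρ := p) ?_,
    isRat_of_sq_eq dist_nonneg (ρ := m) ?_, isRat_of_sq_eq dist_nonneg (ρ := n) ?_⟩
    <;> rw [dist_sq_toLp_fin_two]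
  · ring
  · linear_combination (θ ^ 2 / 4) * h3
  · linear_combination (θ ^ 2 / 4) * h3
  · linear_combination (β * θ) ^ 2 * h3 + hp
  · linear_combination (β * θ) ^ 2 * h3 + hm
  · linear_combination ((β - 1 / 2) * θ) ^ 2 * h3 + hn

theorem exists_sq_dist_of_relation {T p m n : ℚ} (hT : T ≠ 0)
    (h : 3 * (p ^ 4 + m ^ 4 + n ^ 4 + T ^ 2) = (p ^ 2 + m ^ 2 + n ^ 2 + T) ^ 2) :
    ∃ α β : ℚ, T * (α ^ 2 + 3 * β ^ 2) = p ^ 2 ∧ T * ((α - 1) ^ 2 + 3 * β ^ 2) = m ^ 2 ∧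
      T * ((α - 1 / 2) ^ 2 + 3 * (β - 1 / 2) ^ 2) = n ^ 2 := by
  refine ⟨(p ^ 2 + T - m ^ 2) / (2 * T), (p ^ 2 + T + m ^ 2 - 2 * n ^ 2) / (6 * T), ?_, ?_, ?_⟩
  all_goals
    field_simp
    linear_combination 24 * h

theorem exists_solution_of_sq_dist {q lam α β p m n : ℚ} (hq : q ≠ 0) (hlam : lam ≠ 0)
    (hp : p ≠ 0) (h₁ : lam ^ 2 * q * (α ^ 2 + 3 * β ^ 2) = p ^ 2)
    (h₂ : lam ^ 2 * q * ((α - 1) ^ 2 + 3 * β ^ 2) = m ^ 2)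
    (h₃ : lam ^ 2 * q * ((α - 1 / 2) ^ 2 + 3 * (β - 1 / 2) ^ 2) = n ^ 2) :
    ∃ a b e r s : ℚ, e ≠ 0 ∧ a ^ 2 + 3 * b ^ 2 = q ∧ (a + e) ^ 2 + 3 * (b + e) ^ 2 = q * r ^ 2 ∧
      (a - e) ^ 2 + 3 * (b + e) ^ 2 = q * s ^ 2 := by
  refine ⟨lam * q / (2 * p) * (3 * β - α), -(lam * q / (2 * p)) * (α + β), lam * q / (2 * p),
    m / p, n / p, div_ne_zero (mul_ne_zero hlam hq) (by positivity), ?_, ?_, ?_⟩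
  · field_simp
    linear_combination 4 * h₁
  · field_simp
    linear_combination 4 * h₂
  · field_simp
    linear_combination 4 * h₃

theorem exists_sq_dist_of_solution {q lam a b e r s : ℚ} (he : e ≠ 0) (h₁ : a ^ 2 + 3 * b ^ 2 = q)
    (h₂ : (a + e) ^ 2 + 3 * (b + e) ^ 2 = q * r ^ 2)
    (h₃ : (a - e) ^ 2 + 3 * (b + e) ^ 2 = q * s ^ 2) :
    ∃ α β p m n : ℚ, lam ^ 2 * q * (α ^ 2 + 3 * β ^ 2) = p ^ 2 ∧
      lam ^ 2 * q * ((α - 1) ^ 2 + 3 * β ^ 2) = m ^ 2 ∧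
      lam ^ 2 * q * ((α - 1 / 2) ^ 2 + 3 * (β - 1 / 2) ^ 2) = n ^ 2 := by
  refine ⟨-(a + 3 * b) / (4 * e), (a - b) / (4 * e), lam * q / (2 * e), lam * q * r / (2 * e),
    lam * q * s / (2 * e), ?_, ?_, ?_⟩
  · field_simp
    linear_combination (16 * lam ^ 2 * q) * h₁
  · field_simp
    linear_combination (16 * lam ^ 2 * q) * h₂
  · field_simp
    linear_combination (16 * lam ^ 2 * q) * h₃

theorem stmt_6 (q : ℤ) (hq : 1 < q) (hsf : Squarefree q) (lam : ℚ) (hlam : 0 < lam) :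
    Good ((lam : ℝ) * Real.sqrt q) ↔
      ∃ a b e r s : ℚ, e ≠ 0 ∧
        a ^ 2 + 3 * b ^ 2 = q ∧
        (a + e) ^ 2 + 3 * (b + e) ^ 2 = q * r ^ 2 ∧
        (a - e) ^ 2 + 3 * (b + e) ^ 2 = q * s ^ 2 := by
  have hθ : ((lam : ℝ) * √q) ^ 2 = lam ^ 2 * q := by
    rw [mul_pow, Real.sq_sqrt (by exact_mod_cast (by omega : (0 : ℤ) ≤ q))]
  have hq₀ : (q : ℚ) ≠ 0 := by exact_mod_cast (by omega : q ≠ 0)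
  constructor
  · rintro ⟨A, B, C, M, hAB, hBC, hCA, ⟨p, hp⟩, ⟨m, hm⟩, ⟨n, hn⟩⟩
    have : Fact (finrank ℝ Pt = 2) := ⟨finrank_euclideanSpace_fin⟩
    have hrel := dist_relation_of_equilateral (M := M) hAB hBC hCA
    rw [← hp, ← hm, ← hn, show ((lam : ℝ) * √q) ^ 4 = (((lam : ℝ) * √q) ^ 2) ^ 2 by ring,
      hθ] at hrel
    have hp₀ : p ≠ 0 := by
      rintro rfl
      obtain rfl : M = A := dist_eq_zero.1 (by rw [← hp, Rat.cast_zero])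
      exact (irrational_ratCast_mul_iff.2 ⟨hlam.ne', irrational_sqrt_of_squarefree hq hsf⟩).ne_rat
        m (hAB ▸ hm).symm
    obtain ⟨α, β, h₁, h₂, h₃⟩ :=
      exists_sq_dist_of_relation (mul_ne_zero (pow_ne_zero 2 hlam.ne') hq₀) (by exact_mod_cast hrel)
    exact exists_solution_of_sq_dist hq₀ hlam.ne' hp₀ h₁ h₂ h₃
  · rintro ⟨a, b, e, r, s, he, h₁, h₂, h₃⟩
    obtain ⟨α, β, p, m, n, hp, hm, hn⟩ := exists_sq_dist_of_solution (lam := lam) he h₁ h₂ h₃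
    replace hp := congrArg (Rat.cast : ℚ → ℝ) hp
    replace hm := congrArg (Rat.cast : ℚ → ℝ) hm
    replace hn := congrArg (Rat.cast : ℚ → ℝ) hn
    push_cast at hp hm hn
    exact good_of_sq_dist (by positivity) (hθ ▸ hp) (hθ ▸ hm) (hθ ▸ hn)

end
end

section
/- Let x, y, z, t be positive reals satisfying 3(x⁴ + y⁴ + z⁴ + t⁴) = (x² + y² + z² + t²)². Then any three of x, y, z, t satisfy the triangle inequality; in particular x ≤ y + z, y ≤ z + x, and z ≤ x + y. -/
/-!
Write `s = x² + y² + z²`. The hypothesis turns into `3 H(x, y, z) = (s - 2t²)² ≥ 0`, where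
`H = 2(x²y² + y²z² + z²x²) - (x⁴ + y⁴ + z⁴) = (x+y+z)(-x+y+z)(x-y+z)(x+y-z)` is Heron's
expression for sixteen times the squared area. If one of `x, y, z` exceeded the sum of the other
two, exactly one factor of `H` would be negative and `H < 0`.
-/

theorem heron_nonneg_of_quartic_eq {x y z t : ℝ}
    (h : 3 * (x ^ 4 + y ^ 4 + z ^ 4 + t ^ 4) = (x ^ 2 + y ^ 2 + z ^ 2 + t ^ 2) ^ 2) :
    0 ≤ 2 * (x ^ 2 * y ^ 2 + y ^ 2 * z ^ 2 + z ^ 2 * x ^ 2) - (x ^ 4 + y ^ 4 + z ^ 4) := by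
  have hsq : 3 * (2 * (x ^ 2 * y ^ 2 + y ^ 2 * z ^ 2 + z ^ 2 * x ^ 2) - (x ^ 4 + y ^ 4 + z ^ 4)) =
      (x ^ 2 + y ^ 2 + z ^ 2 - 2 * t ^ 2) ^ 2 := by
    linear_combination (-2 : ℝ) * h
  nlinarith [sq_nonneg (x ^ 2 + y ^ 2 + z ^ 2 - 2 * t ^ 2)]

theorem le_add_of_heron_nonneg {a b c : ℝ} (hb : 0 < b) (hc : 0 < c)
    (h : 0 ≤ 2 * (a ^ 2 * b ^ 2 + b ^ 2 * c ^ 2 + c ^ 2 * a ^ 2) - (a ^ 4 + b ^ 4 + c ^ 4)) :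
    a ≤ b + c := by
  by_contra! hlt
  have hfactor : 2 * (a ^ 2 * b ^ 2 + b ^ 2 * c ^ 2 + c ^ 2 * a ^ 2) - (a ^ 4 + b ^ 4 + c ^ 4) =
      -((a + b + c) * (a - b + c) * (a + b - c) * (a - b - c)) := by ring
  have hpos : 0 < (a + b + c) * (a - b + c) * (a + b - c) * (a - b - c) := by
    apply mul_pos (mul_pos (mul_pos _ _) _) <;> linarith
  linarith

theorem stmt_10_general (x y z t : ℝ) (hx : 0 < x) (hy : 0 < y) (hz : 0 < z)
    (h : 3 * (x ^ 4 + y ^ 4 + z ^ 4 + t ^ 4) = (x ^ 2 + y ^ 2 + z ^ 2 + t ^ 2) ^ 2) :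
    x ≤ y + z ∧ y ≤ z + x ∧ z ≤ x + y := by
  have hH := heron_nonneg_of_quartic_eq h
  exact ⟨le_add_of_heron_nonneg hy hz (by linarith), le_add_of_heron_nonneg hz hx (by linarith),
    le_add_of_heron_nonneg hx hy (by linarith)⟩

theorem stmt_10 (x y z t : ℝ) (hx : 0 < x) (hy : 0 < y) (hz : 0 < z) (ht : 0 < t)
    (h : 3 * (x ^ 4 + y ^ 4 + z ^ 4 + t ^ 4) = (x ^ 2 + y ^ 2 + z ^ 2 + t ^ 2) ^ 2) :
    x ≤ y + z ∧ y ≤ z + x ∧ z ≤ x + y :=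
  stmt_10_general x y z t hx hy hz h
end

section
/- Let x, y, z, t be positive reals satisfying 3(x⁴+y⁴+z⁴+t⁴) = (x²+y²+z²+t²)². Then (−x+y+z)(x−y+z)(x+y−z) ≥ 0. -/
/-! Read as a quadratic equation in `t²`, the hypothesis has discriminant
`3 (x+y+z)(-x+y+z)(x-y+z)(x+y-z)`, so this product is a square up to the factor `3`;
dividing by `x + y + z > 0` gives the sign of the remaining three factors. -/

theorem three_mul_heron_product_eq_sq {R : Type*} [CommRing R] {x y z t : R}
    (h : 3 * (x ^ 4 + y ^ 4 + z ^ 4 + t ^ 4) = (x ^ 2 + y ^ 2 + z ^ 2 + t ^ 2) ^ 2) :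
    3 * ((x + y + z) * ((-x + y + z) * (x - y + z) * (x + y - z)))
      = (2 * t ^ 2 - x ^ 2 - y ^ 2 - z ^ 2) ^ 2 := by
  linear_combination (-2 : R) * h

theorem stmt_11_general (x y z t : ℝ) (hx : 0 < x) (hy : 0 < y) (hz : 0 < z)
    (h : 3 * (x ^ 4 + y ^ 4 + z ^ 4 + t ^ 4) = (x ^ 2 + y ^ 2 + z ^ 2 + t ^ 2) ^ 2) :
    0 ≤ (-x + y + z) * (x - y + z) * (x + y - z) := by
  have hprod : 0 ≤ 3 * ((x + y + z) * ((-x + y + z) * (x - y + z) * (x + y - z))) := by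
    rw [three_mul_heron_product_eq_sq h]
    positivity
  exact nonneg_of_mul_nonneg_right (nonneg_of_mul_nonneg_right hprod three_pos) (by positivity)

theorem stmt_11 (x y z t : ℝ) (hx : 0 < x) (hy : 0 < y) (hz : 0 < z) (ht : 0 < t)
    (h : 3 * (x ^ 4 + y ^ 4 + z ^ 4 + t ^ 4) = (x ^ 2 + y ^ 2 + z ^ 2 + t ^ 2) ^ 2) :
    0 ≤ (-x + y + z) * (x - y + z) * (x + y - z) :=
  stmt_11_general x y z t hx hy hz h
end

section
/- Let ABC be an equilateral triangle with side length θ > 0 and let a, b, c be positive reals with 3(a⁴ + b⁴ + c⁴ + θ⁴) = (a² + b² + c² + θ²)². Then there exists a point M in the plane of ABC with MA = a, MB = b, MC = c. -/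
noncomputable section

/-!
Look for `M = A + p • (B - A) + q • (C - A)`. Since `B - A` and `C - A` have length `θ` and
inner product `θ² / 2`, the squared distances from `M` to `A`, `B`, `C` are `θ²` times the
quadratic form `r² + r s + s²` at `(p, q)`, `(p - 1, q)` and `(p, q - 1)`. The differences
`MB² - MA²` and `MC² - MA²` are affine in `(p, q)` and fix them; the remaining equation
`MA² = a²` is then equivalent to the quartic relation.
-/

theorem exists_coords_of_quartic_relation {θ a b c : ℝ} (hθ : θ ≠ 0)
    (h : 3 * (a ^ 4 + b ^ 4 + c ^ 4 + θ ^ 4) = (a ^ 2 + b ^ 2 + c ^ 2 + θ ^ 2) ^ 2) :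
    ∃ p q : ℝ, θ ^ 2 * (p ^ 2 + p * q + q ^ 2) = a ^ 2 ∧
      θ ^ 2 * ((p - 1) ^ 2 + (p - 1) * q + q ^ 2) = b ^ 2 ∧
      θ ^ 2 * (p ^ 2 + p * (q - 1) + (q - 1) ^ 2) = c ^ 2 := by
  refine ⟨(θ ^ 2 + a ^ 2 - 2 * b ^ 2 + c ^ 2) / (3 * θ ^ 2),
    (θ ^ 2 + a ^ 2 + b ^ 2 - 2 * c ^ 2) / (3 * θ ^ 2), ?_, ?_, ?_⟩ <;>
  · field_simp
    linear_combination (3 / 2 : ℝ) * h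

section

variable {V : Type*} [NormedAddCommGroup V] [InnerProductSpace ℝ V]

theorem norm_smul_add_smul_sq_of_equilateral {u v : V} {θ : ℝ} (hu : ‖u‖ = θ) (hv : ‖v‖ = θ)
    (huv : ‖u - v‖ = θ) (r s : ℝ) :
    ‖r • u + s • v‖ ^ 2 = θ ^ 2 * (r ^ 2 + r * s + s ^ 2) := by
  have hinner : inner ℝ u v = θ ^ 2 / 2 := by
    have := norm_sub_sq_real u v
    rw [hu, hv, huv] at this
    linarith
  rw [norm_add_sq_real, norm_smul, norm_smul, real_inner_smul_left, real_inner_smul_right,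
    hinner, hu, hv, Real.norm_eq_abs, Real.norm_eq_abs, mul_pow, mul_pow, sq_abs, sq_abs]
  ring

theorem exists_dist_eq_of_equilateral {A B C : V} {θ a b c : ℝ} (hθ : θ ≠ 0) (ha : 0 ≤ a)
    (hb : 0 ≤ b) (hc : 0 ≤ c) (hAB : dist A B = θ) (hBC : dist B C = θ) (hCA : dist C A = θ)
    (h : 3 * (a ^ 4 + b ^ 4 + c ^ 4 + θ ^ 4) = (a ^ 2 + b ^ 2 + c ^ 2 + θ ^ 2) ^ 2) :
    ∃ M : V, dist M A = a ∧ dist M B = b ∧ dist M C = c := by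
  obtain ⟨p, q, hMA, hMB, hMC⟩ := exists_coords_of_quartic_relation hθ h
  have hu : ‖B - A‖ = θ := by rw [← dist_eq_norm, dist_comm, hAB]
  have hv : ‖C - A‖ = θ := by rw [← dist_eq_norm, hCA]
  have huv : ‖(B - A) - (C - A)‖ = θ := by rw [sub_sub_sub_cancel_right, ← dist_eq_norm, hBC]
  have hnorm := norm_smul_add_smul_sq_of_equilateral hu hv huv
  refine ⟨A + (p • (B - A) + q • (C - A)), ?_, ?_, ?_⟩
  · rw [dist_eq_norm, ← pow_left_inj₀ (norm_nonneg _) ha two_ne_zero, add_sub_cancel_left,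
      hnorm, hMA]
  · have hB : A + (p • (B - A) + q • (C - A)) - B = (p - 1) • (B - A) + q • (C - A) := by
      module
    rw [dist_eq_norm, ← pow_left_inj₀ (norm_nonneg _) hb two_ne_zero, hB, hnorm, hMB]
  · have hC : A + (p • (B - A) + q • (C - A)) - C = p • (B - A) + (q - 1) • (C - A) := by
      module
    rw [dist_eq_norm, ← pow_left_inj₀ (norm_nonneg _) hc two_ne_zero, hC, hnorm, hMC]

end

theorem stmt_12 (θ a b c : ℝ) (hθ : 0 < θ) (ha : 0 < a) (hb : 0 < b) (hc : 0 < c)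
    (A B C : Pt) (hAB : dist A B = θ) (hBC : dist B C = θ) (hCA : dist C A = θ)
    (h : 3 * (a ^ 4 + b ^ 4 + c ^ 4 + θ ^ 4) = (a ^ 2 + b ^ 2 + c ^ 2 + θ ^ 2) ^ 2) :
    ∃ M : Pt, dist M A = a ∧ dist M B = b ∧ dist M C = c :=
  exists_dist_eq_of_equilateral hθ.ne' ha.le hb.le hc.le hAB hBC hCA h
end
end

section
/- Let a, b, c be positive integers forming a non-degenerate triangle with area Δ such that 4Δ√3 is irrational, and let θ > 0 satisfy 2θ² = (a² + b² + c²) + 4Δ√3 or 2θ² = (a² + b² + c²) − 4Δ√3. Then there exists a point in the plane of the equilateral triangle of side θ at rational (indeed integer) distance from all three vertices. -/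
/-!
Put the equilateral triangle at `0`, `(θ, 0)`, `(θ/2, √3 θ/2)`. The circles of radii `a` and `b`
about the first two vertices meet at an explicit point `M`, and the relation
`(2θ² - (a² + b² + c²))² = 3(a+b+c)(-a+b+c)(a-b+c)(a+b-c)`, which the choice of `θ` gives after
squaring, says exactly that `M` is at distance `c` from the third vertex.
-/

noncomputable section

lemma heron_product_nonneg {R : Type*} [CommRing R] [LinearOrder R] [IsStrictOrderedRing R]
    {a b c : R} (ha : a ≤ b + c) (hb : b ≤ c + a) (hc : c ≤ a + b) :
    0 ≤ 3 * (a + b + c) * (-a + b + c) * (a - b + c) * (a + b - c) := by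
  have hsum : 0 ≤ a + b + c := by linarith
  have h₁ : 0 ≤ -a + b + c := by linarith
  have h₂ : 0 ≤ a - b + c := by linarith
  have h₃ : 0 ≤ a + b - c := by linarith
  positivity

lemma sq_sub_eq_of_eq_add_or_sub_sqrt {x s p : ℝ} (hp : 0 ≤ p)
    (h : x = s + √p ∨ x = s - √p) : (x - s) ^ 2 = p := by
  rcases h with rfl | rfl <;> simp [Real.sq_sqrt hp]

lemma dist_vec₂_eq {x y z w r : ℝ} (h : (x - z) ^ 2 + (y - w) ^ 2 = r ^ 2) (hr : 0 ≤ r) :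
    dist !₂[x, y] !₂[z, w] = r := by
  rw [EuclideanSpace.dist_eq, Fin.sum_univ_two]
  simpa [Real.dist_eq, sq_abs, h] using Real.sqrt_sq hr

theorem exists_equilateral_dist_eq {θ a b c : ℝ} (hθ : 0 < θ)
    (ha : 0 ≤ a) (hb : 0 ≤ b) (hc : 0 ≤ c)
    (h : (2 * θ ^ 2 - (a ^ 2 + b ^ 2 + c ^ 2)) ^ 2
      = 3 * (a + b + c) * (-a + b + c) * (a - b + c) * (a + b - c)) :
    ∃ A B C M : Pt, dist A B = θ ∧ dist B C = θ ∧ dist C A = θ ∧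
      dist M A = a ∧ dist M B = b ∧ dist M C = c := by
  have hs : √3 ^ 2 = 3 := Real.sq_sqrt (by norm_num)
  have hs₀ : √3 ≠ 0 := by positivity
  have hθ₀ : θ ≠ 0 := hθ.ne'
  set x := (θ ^ 2 + a ^ 2 - b ^ 2) / (2 * θ)
  set y := (θ ^ 2 + a ^ 2 + b ^ 2 - 2 * c ^ 2) / (2 * √3 * θ)
  refine ⟨!₂[0, 0], !₂[θ, 0], !₂[θ / 2, √3 * θ / 2], !₂[x, y], ?_, ?_, ?_, ?_, ?_, ?_⟩
  · exact dist_vec₂_eq (by ring) hθ.le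
  · exact dist_vec₂_eq (by linear_combination θ ^ 2 / 4 * hs) hθ.le
  · exact dist_vec₂_eq (by linear_combination θ ^ 2 / 4 * hs) hθ.le
  · refine dist_vec₂_eq ?_ ha
    simp only [x, y]
    field_simp
    linear_combination h + ((θ ^ 2 + a ^ 2 - b ^ 2) ^ 2 - 4 * θ ^ 2 * a ^ 2) * hs
  · refine dist_vec₂_eq ?_ hb
    simp only [x, y]
    field_simp
    linear_combination h + ((a ^ 2 - b ^ 2 - θ ^ 2) ^ 2 - 4 * θ ^ 2 * b ^ 2) * hs
  · refine dist_vec₂_eq ?_ hc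
    simp only [x, y]
    field_simp
    linear_combination h + ((a ^ 2 - b ^ 2) ^ 2 - 4 * θ ^ 2 * c ^ 2
      - 2 * θ ^ 2 * (a ^ 2 + b ^ 2 - 2 * c ^ 2 - 2 * θ ^ 2) + θ ^ 4 * (√3 ^ 2 - 3)) * hs

theorem stmt_14_general (a b c : ℕ)
    (htri : a < b + c ∧ b < c + a ∧ c < a + b)
    (θ : ℝ) (hθ : 0 < θ)
    (hform : 2 * θ ^ 2 = ((a : ℝ) ^ 2 + b ^ 2 + c ^ 2) +
        Real.sqrt (3 * (a + b + c) * (-(a:ℝ) + b + c) * (a - b + c) * (a + b - c)) ∨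
      2 * θ ^ 2 = ((a : ℝ) ^ 2 + b ^ 2 + c ^ 2) -
        Real.sqrt (3 * (a + b + c) * (-(a:ℝ) + b + c) * (a - b + c) * (a + b - c))) :
    ∃ A B C M : Pt, dist A B = θ ∧ dist B C = θ ∧ dist C A = θ ∧
      (∃ n : ℤ, (n : ℝ) = dist M A) ∧ (∃ n : ℤ, (n : ℝ) = dist M B) ∧
      (∃ n : ℤ, (n : ℝ) = dist M C) := by
  obtain ⟨hab, hbc, hca⟩ := htri
  have hP : 0 ≤ 3 * (a + b + c) * (-(a : ℝ) + b + c) * (a - b + c) * (a + b - c) :=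
    heron_product_nonneg (by exact_mod_cast hab.le) (by exact_mod_cast hbc.le)
      (by exact_mod_cast hca.le)
  obtain ⟨A, B, C, M, hAB, hBC, hCA, hMA, hMB, hMC⟩ :=
    exists_equilateral_dist_eq hθ a.cast_nonneg b.cast_nonneg c.cast_nonneg
      (sq_sub_eq_of_eq_add_or_sub_sqrt hP hform)
  exact ⟨A, B, C, M, hAB, hBC, hCA, ⟨a, by simp [hMA]⟩, ⟨b, by simp [hMB]⟩, ⟨c, by simp [hMC]⟩⟩

theorem stmt_14 (a b c : ℕ) (ha : 0 < a) (hb : 0 < b) (hc : 0 < c)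
    (htri : a < b + c ∧ b < c + a ∧ c < a + b)
    (hirr : Irrational (Real.sqrt (3 * (a + b + c) * (-(a:ℝ) + b + c) * (a - b + c) * (a + b - c))))
    (θ : ℝ) (hθ : 0 < θ)
    (hform : 2 * θ ^ 2 = ((a : ℝ) ^ 2 + b ^ 2 + c ^ 2) +
        Real.sqrt (3 * (a + b + c) * (-(a:ℝ) + b + c) * (a - b + c) * (a + b - c)) ∨
      2 * θ ^ 2 = ((a : ℝ) ^ 2 + b ^ 2 + c ^ 2) -
        Real.sqrt (3 * (a + b + c) * (-(a:ℝ) + b + c) * (a - b + c) * (a + b - c))) :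
    ∃ A B C M : Pt, dist A B = θ ∧ dist B C = θ ∧ dist C A = θ ∧
      (∃ n : ℤ, (n : ℝ) = dist M A) ∧ (∃ n : ℤ, (n : ℝ) = dist M B) ∧
      (∃ n : ℤ, (n : ℝ) = dist M C) :=
  stmt_14_general a b c htri θ hθ hform
end
end

section
/- For θ = √(25 + 12√3), there exists a point in the plane of the equilateral triangle of side θ whose distances to all three vertices are rational. -/
/-!
For an equilateral triangle of side `θ` and distances `a, b, c` from a point to its vertices,
`3 (a⁴ + b⁴ + c⁴ + θ⁴) = (a² + b² + c² + θ²)²`. With `(a, b, c) = (3, 4, 5)` this reads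
`θ⁴ - 50 θ² + 193 = 0`, whose root `θ² = 25 + 12 √3` is ours. Concretely, with the triangle at
`(0, 0)`, `(θ, 0)`, `(θ / 2, θ √3 / 2)`, the point `(9 + 6 √3, 6) / θ` is at distances `3, 4, 5`.
-/

noncomputable section

lemma dist_toLp_eq_of_sq {a b c d r : ℝ} (hr : 0 ≤ r) (h : (a - c) ^ 2 + (b - d) ^ 2 = r ^ 2) :
    dist !₂[a, b] !₂[c, d] = r := by
  rw [EuclideanSpace.dist_eq, Fin.sum_univ_two]
  simp [Real.dist_eq, sq_abs, h, Real.sqrt_sq hr]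

lemma good_of_sq_dists {θ x y : ℝ} {a b c : ℚ} (hθ : 0 ≤ θ) (ha : 0 ≤ a) (hb : 0 ≤ b) (hc : 0 ≤ c)
    (hA : x ^ 2 + y ^ 2 = a ^ 2) (hB : (x - θ) ^ 2 + y ^ 2 = b ^ 2)
    (hC : (x - θ / 2) ^ 2 + (y - θ * √3 / 2) ^ 2 = c ^ 2) : Good θ := by
  have h3 : √3 ^ 2 = 3 := Real.sq_sqrt (by norm_num)
  refine ⟨!₂[0, 0], !₂[θ, 0], !₂[θ / 2, θ * √3 / 2], !₂[x, y],
    dist_toLp_eq_of_sq hθ (by ring),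
    dist_toLp_eq_of_sq hθ (by linear_combination θ ^ 2 / 4 * h3),
    dist_toLp_eq_of_sq hθ (by linear_combination θ ^ 2 / 4 * h3),
    ⟨a, (dist_toLp_eq_of_sq (by exact_mod_cast ha) (by linear_combination hA)).symm⟩,
    ⟨b, (dist_toLp_eq_of_sq (by exact_mod_cast hb) (by linear_combination hB)).symm⟩,
    ⟨c, (dist_toLp_eq_of_sq (by exact_mod_cast hc) (by linear_combination hC)).symm⟩⟩

theorem stmt_17 : Good (Real.sqrt (25 + 12 * Real.sqrt 3)) := by
  set θ := √(25 + 12 * √3)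
  have h3 : √3 ^ 2 = 3 := Real.sq_sqrt (by norm_num)
  have hθ2 : θ ^ 2 = 25 + 12 * √3 := Real.sq_sqrt (by positivity)
  have hθ : 0 < θ := by positivity
  -- `MA = 3` and `MB = 4` force `2 θ x = θ ^ 2 - 7`, and then `x ^ 2 + y ^ 2 = 9` gives `y`.
  obtain ⟨x, hx⟩ : ∃ x, θ * x = 9 + 6 * √3 := ⟨_, mul_div_cancel₀ _ hθ.ne'⟩
  obtain ⟨y, hy⟩ : ∃ y, θ * y = 6 := ⟨_, mul_div_cancel₀ _ hθ.ne'⟩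
  have hA : x ^ 2 + y ^ 2 = 3 ^ 2 := by
    refine mul_left_cancel₀ (pow_ne_zero 2 hθ.ne') ?_
    linear_combination (θ * x + 9 + 6 * √3) * hx + (θ * y + 6) * hy + 36 * h3 - 9 * hθ2
  refine good_of_sq_dists (a := 3) (b := 4) (c := 5) hθ.le (by norm_num) (by norm_num) (by norm_num)
    (by push_cast; exact hA) (by push_cast; linear_combination hA - 2 * hx + hθ2)
    (by push_cast; linear_combination hA - hx - √3 * hy + (θ ^ 2 / 4) * h3 + hθ2)
end
end
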